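/- arXiv:1911.10056 — 2 statements merged into one kernel-verified Lean document; each statement's English description precedes it below -/
import Mathlib

section
/- Let I ⊂ ℝ be an open interval and (f_α)_{α ∈ I} a continuous family of holomorphic maps f_α : 𝔻 → ℂ with f_α(z) = e^{2πiα}z + O(z²). Let r(α) be the conformal radius at 0 of the Siegel disk Δ(f_α) (with r(α) = 0 if Δ(f_α) = ∅). Then r is upper semi-continuous: for every α ∈ I and every sequence α_n → α in I, limsup r(α_n) ≤ r(α). -/
open Metric Set Filter

/-- The set of points of the unit disk whose forward orbit under `f` stays in the
unit disk. -/
def filledSet (f : ℂ → ℂ) : Set ℂ := {z : ℂ | ∀ n : ℕ, f^[n] z ∈ ball (0 : ℂ) 1}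

/-- The Siegel disk of `f`: the connected component of `0` in the interior of the
filled set (empty if `0` is not in this interior). -/
def siegelDisk (f : ℂ → ℂ) : Set ℂ := connectedComponentIn (interior (filledSet f)) 0

/-- `r` is the conformal radius of `U` at `0`: either `U = ∅` and `r = 0`, or there
is a conformal bijection `φ : B(0,r) → U` with `φ 0 = 0`, `φ' 0 = 1`. -/
def IsConformalRadius (U : Set ℂ) (r : ℝ) : Prop :=
  (U = ∅ ∧ r = 0) ∨
  (0 < r ∧ ∃ φ : ℂ → ℂ, DifferentiableOn ℂ φ (ball (0 : ℂ) r) ∧ φ 0 = 0 ∧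
    deriv φ 0 = 1 ∧ Set.BijOn φ (ball (0 : ℂ) r) U)


lemma nonconst_open {ψ : ℂ → ℂ} {s : ℝ}
    (hd : DifferentiableOn ℂ ψ (ball (0:ℂ) s)) (h0 : (0:ℂ) ∈ ball (0:ℂ) s)
    (hne : deriv ψ 0 ≠ 0) :
    ∀ t ⊆ ball (0:ℂ) s, IsOpen t → IsOpen (ψ '' t) := by
  have han : AnalyticOnNhd ℂ ψ (ball (0:ℂ) s) := hd.analyticOnNhd isOpen_ball
  rcases han.is_constant_or_isOpen (convex_ball _ _).isPreconnected with h | h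
  · rcases h with ⟨w, hw⟩
    exfalso
    have hev : ψ =ᶠ[nhds (0:ℂ)] fun _ => w :=
      eventually_of_mem (isOpen_ball.mem_nhds h0) hw
    have hde := hev.deriv_eq
    rw [deriv_const] at hde
    exact hne hde
  · exact h

lemma exists_holo_inverse {s : ℝ} {ψ : ℂ → ℂ} {U : Set ℂ} (hs : 0 < s)
    (hd : DifferentiableOn ℂ ψ (ball (0:ℂ) s)) (hbij : BijOn ψ (ball (0:ℂ) s) U)
    (h0 : ψ 0 = 0) (h1 : deriv ψ 0 = 1) :
    IsOpen U ∧ ∃ g : ℂ → ℂ, DifferentiableOn ℂ g U ∧ MapsTo g U (ball (0:ℂ) s) ∧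
      (∀ z ∈ ball (0:ℂ) s, g (ψ z) = z) ∧ (∀ w ∈ U, ψ (g w) = w) ∧
      g 0 = 0 ∧ deriv g 0 = 1 := by
  have h0m : (0:ℂ) ∈ ball (0:ℂ) s := by simpa using hs
  have hopen := nonconst_open hd h0m (by rw [h1]; exact one_ne_zero)
  have hUeq : U = ψ '' ball (0:ℂ) s := hbij.image_eq.symm
  have hUopen : IsOpen U := hUeq ▸ hopen _ subset_rfl isOpen_ball
  set g := Function.invFunOn ψ (ball (0:ℂ) s) with hg
  have hinv := hbij.invOn_invFunOn
  have hleft : ∀ z ∈ ball (0:ℂ) s, g (ψ z) = z := fun z hz => hinv.1 hz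
  have hright : ∀ w ∈ U, ψ (g w) = w := fun w hw => hinv.2 hw
  have hmaps : MapsTo g U (ball (0:ℂ) s) := by
    intro w hw
    rw [hUeq] at hw
    obtain ⟨z, hz, rfl⟩ := hw
    rw [hleft z hz]; exact hz
  have hg0 : g 0 = 0 := by have := hleft 0 h0m; rwa [h0] at this
  have hcont : ContinuousOn g U := by
    rw [_root_.continuousOn_iff]
    intro w hw t ht hgt
    refine ⟨ψ '' (t ∩ ball (0:ℂ) s), hopen _ inter_subset_right (ht.inter isOpen_ball), ?_, ?_⟩
    · exact ⟨g w, ⟨hgt, hmaps hw⟩, hright w hw⟩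
    · rintro x ⟨⟨z, ⟨hzt, hzb⟩, rfl⟩, -⟩
      rw [mem_preimage, hleft z hzb]; exact hzt
  have hderiv : ∀ z₀ ∈ ball (0:ℂ) s, deriv ψ z₀ ≠ 0 → HasDerivAt g (deriv ψ z₀)⁻¹ (ψ z₀) := by
    intro z₀ hz₀ hne
    have hU0 : ψ z₀ ∈ U := hbij.mapsTo hz₀
    have hψz : HasDerivAt ψ (deriv ψ z₀) z₀ :=
      (hd.differentiableAt (isOpen_ball.mem_nhds hz₀)).hasDerivAt
    rw [hasDerivAt_iff_tendsto_slope]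
    have hUnhds : U ∈ nhds (ψ z₀) := hUopen.mem_nhds hU0
    have hfil : nhdsWithin (ψ z₀) {ψ z₀}ᶜ = nhdsWithin (ψ z₀) (U \ {ψ z₀}) := by
      rw [diff_eq, inter_comm]
      exact (nhdsWithin_inter_of_mem' (mem_nhdsWithin_of_mem_nhds hUnhds)).symm
    rw [hfil]
    have hgz0 : g (ψ z₀) = z₀ := hleft z₀ hz₀
    have hgc : Tendsto g (nhdsWithin (ψ z₀) (U \ {ψ z₀})) (nhdsWithin z₀ {z₀}ᶜ) := by
      rw [tendsto_nhdsWithin_iff]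
      constructor
      · have hca : ContinuousAt g (ψ z₀) := hcont.continuousAt hUnhds
        have := hca.tendsto
        rw [hgz0] at this
        exact this.mono_left nhdsWithin_le_nhds
      · filter_upwards [self_mem_nhdsWithin] with w hw
        simp only [mem_compl_iff, mem_singleton_iff]
        intro hwz
        exact hw.2 (mem_singleton_iff.mpr (by rw [← hright w hw.1, hwz]))
    have hslope : Tendsto (slope ψ z₀) (nhdsWithin z₀ {z₀}ᶜ) (nhds (deriv ψ z₀)) :=
      hasDerivAt_iff_tendsto_slope.mp hψz
    have hcomp : Tendsto (fun w => slope ψ z₀ (g w))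
        (nhdsWithin (ψ z₀) (U \ {ψ z₀})) (nhds (deriv ψ z₀)) := hslope.comp hgc
    refine (hcomp.inv₀ hne).congr' ?_
    filter_upwards [self_mem_nhdsWithin] with w hw
    obtain ⟨hwU, hwne⟩ := hw
    have hwe : ψ (g w) = w := hright w hwU
    rw [slope_def_field, slope_def_field, inv_div, hgz0, hwe]
  have hdiffat : ∀ w ∈ U, DifferentiableAt ℂ g w := by
    intro w hw
    have hUnhds : U ∈ nhds w := hUopen.mem_nhds hw
    rw [hUeq] at hw
    obtain ⟨z₀, hz₀, rfl⟩ := hw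
    by_cases hne : deriv ψ z₀ = 0
    swap
    · exact (hderiv z₀ hz₀ hne).differentiableAt
    · have han : AnalyticOnNhd ℂ ψ (ball (0:ℂ) s) := hd.analyticOnNhd isOpen_ball
      have hand : AnalyticOnNhd ℂ (deriv ψ) (ball (0:ℂ) s) := han.deriv
      have hiso : ∀ᶠ z in nhdsWithin z₀ {z₀}ᶜ, deriv ψ z ≠ 0 := by
        rcases (hand z₀ hz₀).eventually_eq_zero_or_eventually_ne_zero with h | h
        · exfalso
          have hz := hand.eqOn_zero_of_preconnected_of_eventuallyEq_zero
            (convex_ball _ _).isPreconnected hz₀ h h0m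
          rw [h1] at hz
          exact one_ne_zero hz
        · exact h
      rw [eventually_nhdsWithin_iff] at hiso
      obtain ⟨t, htn, hto, hiso'⟩ : ∃ t ∈ nhds z₀, IsOpen t ∧ ∀ z ∈ t, z ∈ ({z₀}ᶜ : Set ℂ) → deriv ψ z ≠ 0 := by
        rcases _root_.eventually_nhds_iff.mp hiso with ⟨t, ht1, ht2, ht3⟩
        exact ⟨t, ht2.mem_nhds ht3, ht2, ht1⟩
      set t' := t ∩ ball (0:ℂ) s with ht'
      have ht'o : IsOpen t' := hto.inter isOpen_ball
      have hz₀t' : z₀ ∈ t' := ⟨mem_of_mem_nhds htn, hz₀⟩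
      set V := ψ '' t' with hV
      have hVopen : IsOpen V := hopen _ inter_subset_right ht'o
      have hwV : ψ z₀ ∈ V := mem_image_of_mem _ hz₀t'
      have hVn : V ∈ nhds (ψ z₀) := hVopen.mem_nhds hwV
      have hdo : DifferentiableOn ℂ g (V \ {ψ z₀}) := by
        rintro w ⟨⟨z, hzt', rfl⟩, hwne⟩
        have hzne : z ∈ ({z₀}ᶜ : Set ℂ) := by
          intro hzz
          rw [mem_singleton_iff] at hzz
          exact hwne (by rw [hzz]; rfl)
        have := hderiv z hzt'.2 (hiso' z hzt'.1 hzne)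
        exact this.differentiableAt.differentiableWithinAt
      have hca : ContinuousAt g (ψ z₀) := hcont.continuousAt hUnhds
      have := (Complex.differentiableOn_compl_singleton_and_continuousAt_iff hVn).mp ⟨hdo, hca⟩
      exact this.differentiableAt hVn
  refine ⟨hUopen, g, fun w hw => (hdiffat w hw).differentiableWithinAt, hmaps, hleft, hright, hg0, ?_⟩
  have h1' : deriv ψ 0 ≠ 0 := by rw [h1]; exact one_ne_zero
  have := (hderiv 0 h0m h1').deriv
  rw [h0, h1, inv_one] at this
  exact this


lemma filledSet_subset_ball (F : ℂ → ℂ) : filledSet F ⊆ ball (0:ℂ) 1 := fun z hz => by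
  simpa using hz 0

lemma mapsTo_filledSet (F : ℂ → ℂ) : MapsTo F (filledSet F) (filledSet F) := by
  intro z hz n
  rw [← Function.iterate_succ_apply]
  exact hz (n+1)

lemma siegel_subset_ball (F : ℂ → ℂ) : siegelDisk F ⊆ ball (0:ℂ) 1 :=
  (connectedComponentIn_subset _ _).trans (interior_subset.trans (filledSet_subset_ball F))

lemma mapsTo_siegel {F : ℂ → ℂ} (hF : DifferentiableOn ℂ F (ball (0:ℂ) 1))
    (hF0 : F 0 = 0) (hne : deriv F 0 ≠ 0) :
    MapsTo F (siegelDisk F) (siegelDisk F) := by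
  by_cases h0 : (0:ℂ) ∈ interior (filledSet F)
  swap
  · rw [siegelDisk, connectedComponentIn_eq_empty h0]
    exact mapsTo_empty F ∅
  · have hopen := nonconst_open hF (by simpa using one_pos) hne
    have hint : F '' interior (filledSet F) ⊆ interior (filledSet F) := by
      apply interior_maximal
      · rintro w ⟨z, hz, rfl⟩
        exact mapsTo_filledSet F (interior_subset hz)
      · exact hopen _ (interior_subset.trans (filledSet_subset_ball F)) isOpen_interior
    have hC : IsPreconnected (F '' siegelDisk F) :=
      (isPreconnected_connectedComponentIn).image F
        (hF.continuousOn.mono (siegel_subset_ball F))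
    have h0C : (0:ℂ) ∈ F '' siegelDisk F := ⟨0, mem_connectedComponentIn h0, hF0⟩
    have hsub : F '' siegelDisk F ⊆ interior (filledSet F) := by
      rintro w ⟨z, hz, rfl⟩
      exact hint ⟨z, connectedComponentIn_subset _ _ hz, rfl⟩
    intro z hz
    exact hC.subset_connectedComponentIn h0C hsub ⟨z, hz, rfl⟩

lemma conj_rotation {F : ℂ → ℂ} {ρ : ℝ} {ψ : ℂ → ℂ} (hρ : 0 < ρ)
    (hF : DifferentiableOn ℂ F (ball (0:ℂ) 1)) (hF0 : F 0 = 0)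
    (hl : ‖deriv F 0‖ = 1)
    (hd : DifferentiableOn ℂ ψ (ball (0:ℂ) ρ)) (hbij : BijOn ψ (ball (0:ℂ) ρ) (siegelDisk F))
    (h0 : ψ 0 = 0) (h1 : deriv ψ 0 = 1) :
    ∀ z ∈ ball (0:ℂ) ρ, F (ψ z) = ψ (deriv F 0 * z) := by
  have hne : deriv F 0 ≠ 0 := fun h => by simp [h] at hl
  obtain ⟨hUopen, g, hgd, hgm, hgl, hgr, hg0, hg1⟩ := exists_holo_inverse hρ hd hbij h0 h1
  have hsb := siegel_subset_ball F
  have hFS := mapsTo_siegel hF hF0 hne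
  have h0m : (0:ℂ) ∈ ball (0:ℂ) ρ := by simpa using hρ
  have h0S : (0:ℂ) ∈ siegelDisk F := by have := hbij.mapsTo h0m; rwa [h0] at this
  set G := g ∘ (F ∘ ψ) with hG
  have hFψd : DifferentiableOn ℂ (F ∘ ψ) (ball (0:ℂ) ρ) :=
    DifferentiableOn.comp (hF.mono hsb) hd hbij.mapsTo
  have hGd : DifferentiableOn ℂ G (ball (0:ℂ) ρ) :=
    DifferentiableOn.comp hgd hFψd (fun z hz => hFS (hbij.mapsTo hz))
  have hGm : MapsTo G (ball (0:ℂ) ρ) (ball (0:ℂ) ρ) :=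
    fun z hz => hgm (hFS (hbij.mapsTo hz))
  have hG0 : G 0 = 0 := by simp [hG, Function.comp, h0, hF0, hg0]
  have hψ0' : HasDerivAt ψ 1 0 := by
    have := (hd.differentiableAt (isOpen_ball.mem_nhds h0m)).hasDerivAt
    rwa [h1] at this
  have hF0' : HasDerivAt F (deriv F 0) 0 :=
    (hF.differentiableAt (isOpen_ball.mem_nhds (by simpa using one_pos))).hasDerivAt
  have hg0' : HasDerivAt g 1 0 := by
    have := (hgd.differentiableAt (hUopen.mem_nhds h0S)).hasDerivAt
    rwa [hg1] at this
  have hG0' : HasDerivAt G (deriv F 0) 0 := by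
    have h2 : HasDerivAt (F ∘ ψ) (deriv F 0 * 1) 0 := by
      apply HasDerivAt.comp
      · rw [h0]; exact hF0'
      · exact hψ0'
    have h3 : HasDerivAt (g ∘ (F ∘ ψ)) (1 * (deriv F 0 * 1)) 0 := by
      apply HasDerivAt.comp
      · rw [show (F ∘ ψ) 0 = 0 by simp [Function.comp, h0, hF0]]; exact hg0'
      · exact h2
    simpa using h3
  have heq := Complex.affine_of_mapsTo_ball_of_exists_norm_dslope_eq_div (c := (0:ℂ))
    (z₀ := (0:ℂ)) (R₁ := ρ) (R₂ := ρ) hGd (by rw [hG0]; exact hGm.mono_right ball_subset_closedBall) h0m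
    (by rw [dslope_same, hG0'.deriv, hl, div_self hρ.ne'])
  intro z hz
  have hz' := heq hz
  simp only [hG0, sub_zero, zero_add, dslope_same, hG0'.deriv, smul_eq_mul] at hz'
  have hw : F (ψ z) ∈ siegelDisk F := hFS (hbij.mapsTo hz)
  have hr := hgr _ hw
  rw [← hr]
  congr 1
  rw [show g (F (ψ z)) = G z from rfl, hz', mul_comm]

lemma iterate_conj {F Φ : ℂ → ℂ} {s : ℝ} {l : ℂ} (hl : ‖l‖ = 1)
    (hconj : ∀ z ∈ ball (0:ℂ) s, F (Φ z) = Φ (l * z)) :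
    ∀ k : ℕ, ∀ z ∈ ball (0:ℂ) s, F^[k] (Φ z) = Φ (l ^ k * z) := by
  intro k
  induction k with
  | zero => intro z hz; simp
  | succ k ih =>
    intro z hz
    have hmem : l ^ k * z ∈ ball (0:ℂ) s := by
      rw [mem_ball_zero_iff] at hz ⊢
      rwa [norm_mul, norm_pow, hl, one_pow, one_mul]
    rw [Function.iterate_succ_apply', ih z hz, hconj _ hmem, ← mul_assoc, ← pow_succ']

lemma le_radius_of_into {F : ℂ → ℂ} {s rad : ℝ} {φ : ℂ → ℂ} (hs : 0 < s)
    (hφ : DifferentiableOn ℂ φ (ball (0:ℂ) s)) (hmapsφ : MapsTo φ (ball (0:ℂ) s) (siegelDisk F))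
    (hφ0 : φ 0 = 0) (hφ1 : deriv φ 0 = 1)
    (hrad : IsConformalRadius (siegelDisk F) rad) : s ≤ rad := by
  have h0m : (0:ℂ) ∈ ball (0:ℂ) s := by simpa using hs
  have h0S : (0:ℂ) ∈ siegelDisk F := by have := hmapsφ h0m; rwa [hφ0] at this
  rcases hrad with ⟨hemp, -⟩ | ⟨hpos, ψ, hψd, hψ0, hψ1, hψbij⟩
  · rw [hemp] at h0S; exact absurd h0S (notMem_empty _)
  obtain ⟨hUopen, g, hgd, hgm, hgl, hgr, hg0, hg1⟩ := exists_holo_inverse hpos hψd hψbij hψ0 hψ1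
  set h := g ∘ φ with hh
  have hhd : DifferentiableOn ℂ h (ball (0:ℂ) s) := hgd.comp hφ hmapsφ
  have hmaps : MapsTo h (ball (0:ℂ) s) (ball (0:ℂ) rad) := fun z hz => hgm (hmapsφ hz)
  have hh0 : h 0 = 0 := by simp [hh, Function.comp, hφ0, hg0]
  have hd1 : deriv h 0 = 1 := by
    have hφ0' : HasDerivAt φ 1 0 := by
      have := (hφ.differentiableAt (isOpen_ball.mem_nhds h0m)).hasDerivAt
      rwa [hφ1] at this
    have hg0' : HasDerivAt g 1 0 := by
      have := (hgd.differentiableAt (hUopen.mem_nhds h0S)).hasDerivAt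
      rwa [hg1] at this
    have hc : HasDerivAt h (1 * 1) 0 := by
      apply HasDerivAt.comp
      · rw [hφ0]; exact hg0'
      · exact hφ0'
    simpa using hc.deriv
  have hS := Complex.norm_deriv_le_div_of_mapsTo_ball (R₂ := rad) hhd (by rw [hh0]; exact hmaps.mono_right ball_subset_closedBall) hs
  rw [hd1] at hS
  simp only [norm_one] at hS
  rwa [le_div_iff₀ hs, one_mul] at hS


/-- Upper semi-continuity of the conformal radius of Siegel disks in a continuous
family `f_α(z) = e^{2πiα} z + O(z²)` of holomorphic maps of the unit disk. -/
theorem conformal_radius_upper_semicontinuous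
    (S : Set ℝ) (hSo : IsOpen S) (hSc : Convex ℝ S)
    (f : ℝ → ℂ → ℂ)
    (hol : ∀ α ∈ S, DifferentiableOn ℂ (f α) (ball (0 : ℂ) 1))
    (hfix : ∀ α ∈ S, f α 0 = 0)
    (hmult : ∀ α ∈ S, deriv (f α) 0 = Complex.exp (2 * Real.pi * Complex.I * α))
    (hcont : ContinuousOn (fun p : ℝ × ℂ => f p.1 p.2) (S ×ˢ ball (0 : ℂ) 1))
    (r : ℝ → ℝ) (hr : ∀ α ∈ S, IsConformalRadius (siegelDisk (f α)) (r α))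
    (α : ℝ) (hα : α ∈ S)
    (αseq : ℕ → ℝ) (hseq : ∀ n, αseq n ∈ S)
    (hlim : Tendsto αseq atTop (nhds α)) :
    limsup (fun n => r (αseq n)) atTop ≤ r α := by
  by_contra hcon
  push_neg at hcon
  have hnon : ∀ γ ∈ S, 0 ≤ r γ := by
    intro γ hγ
    rcases hr γ hγ with ⟨-, h⟩ | ⟨h, -⟩
    · exact h.ge
    · exact h.le
  have hrα0 : 0 ≤ r α := hnon α hα
  obtain ⟨ρ₂, hρ₂l, hρ₂u⟩ := exists_between hcon
  obtain ⟨ρ₁, hρ₁l, hρ₁u⟩ := exists_between hρ₂l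
  have hρ₁pos : 0 < ρ₁ := lt_of_le_of_lt hrα0 hρ₁l
  have hδ : 0 < ρ₂ - ρ₁ := sub_pos.mpr hρ₁u
  have hbdd : IsBoundedUnder (· ≥ ·) atTop (fun n => r (αseq n)) :=
    isBoundedUnder_of ⟨0, fun n => hnon _ (hseq n)⟩
  have hcob : IsCoboundedUnder (· ≤ ·) atTop (fun n => r (αseq n)) :=
    hbdd.isCoboundedUnder_le
  have hfreq : ∃ᶠ n in atTop, ρ₂ < r (αseq n) := frequently_lt_of_lt_limsup hcob hρ₂u
  obtain ⟨e, he_mono, he⟩ := extraction_of_frequently_atTop hfreq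
  set β : ℕ → ℝ := fun n => αseq (e n) with hβ
  have hβS : ∀ n, β n ∈ S := fun n => hseq (e n)
  have hβlim : Tendsto β atTop (nhds α) := hlim.comp he_mono.tendsto_atTop
  have hρ₂r : ∀ n, ρ₂ < r (β n) := he
  have hrpos : ∀ n, 0 < r (β n) := fun n => hρ₁pos.trans (hρ₁u.trans (hρ₂r n))
  have hex : ∀ n, ∃ φ : ℂ → ℂ, DifferentiableOn ℂ φ (ball (0:ℂ) (r (β n))) ∧ φ 0 = 0 ∧
      deriv φ 0 = 1 ∧ BijOn φ (ball (0:ℂ) (r (β n))) (siegelDisk (f (β n))) := by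
    intro n
    rcases hr (β n) (hβS n) with ⟨-, h0⟩ | ⟨-, φ, h⟩
    · exact absurd h0 (hrpos n).ne'
    · exact ⟨φ, h⟩
  choose ψs hψd hψ0 hψ1 hψbij using hex
  have hnorme : ∀ γ : ℝ, ‖Complex.exp (2 * Real.pi * Complex.I * γ)‖ = 1 := by
    intro γ
    have : (2 * Real.pi * Complex.I * γ) = ((2 * Real.pi * γ : ℝ) : ℂ) * Complex.I := by
      push_cast; ring
    rw [this, Complex.norm_exp_ofReal_mul_I]
  set lam : ℕ → ℂ := fun n => Complex.exp (2 * Real.pi * Complex.I * β n) with hlam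
  have hlamd : ∀ n, deriv (f (β n)) 0 = lam n := fun n => hmult _ (hβS n)
  have hnormlam : ∀ n, ‖lam n‖ = 1 := fun n => hnorme (β n)
  have hconj : ∀ n, ∀ z ∈ ball (0:ℂ) (r (β n)), f (β n) (ψs n z) = ψs n (lam n * z) := by
    intro n z hz
    have := conj_rotation (hrpos n) (hol _ (hβS n)) (hfix _ (hβS n))
      (by rw [hlamd n]; exact hnormlam n) (hψd n) (hψbij n) (hψ0 n) (hψ1 n) z hz
    rwa [hlamd n] at this
  have hψball : ∀ n, ∀ z ∈ ball (0:ℂ) (r (β n)), ψs n z ∈ ball (0:ℂ) 1 :=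
    fun n z hz => siegel_subset_ball _ ((hψbij n).mapsTo hz)
  have hsub : ∀ n, ball (0:ℂ) ρ₂ ⊆ ball (0:ℂ) (r (β n)) := fun n => ball_subset_ball (hρ₂r n).le
  have hsub' : closedBall (0:ℂ) ρ₁ ⊆ ball (0:ℂ) ρ₂ := closedBall_subset_ball hρ₁u
  set K : ℝ := 2 / (ρ₂ - ρ₁) with hK
  have hK0 : 0 < K := by positivity
  have hLip : ∀ n, ∀ x ∈ closedBall (0:ℂ) ρ₁, ∀ y ∈ closedBall (0:ℂ) ρ₁,
      ‖ψs n x - ψs n y‖ ≤ K * ‖x - y‖ := by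
    intro n
    have hder : ∀ x ∈ closedBall (0:ℂ) ρ₁, ‖deriv (ψs n) x‖ ≤ K := by
      intro x hx
      have hball : ball x (ρ₂ - ρ₁) ⊆ ball (0:ℂ) (r (β n)) := by
        intro y hy
        apply hsub n
        rw [mem_ball] at hy ⊢
        calc dist y 0 ≤ dist y x + dist x 0 := dist_triangle _ _ _
        _ < (ρ₂ - ρ₁) + ρ₁ := add_lt_add_of_lt_of_le hy (mem_closedBall.mp hx)
        _ = ρ₂ := by ring
      have hdm : MapsTo (ψs n) (ball x (ρ₂ - ρ₁)) (ball (ψs n x) 2) := by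
        intro y hy
        have h1 := hψball n y (hball hy)
        have h2 := hψball n x (hball (mem_ball_self hδ))
        rw [mem_ball] at h1 h2 ⊢
        calc dist (ψs n y) (ψs n x) ≤ dist (ψs n y) 0 + dist 0 (ψs n x) := dist_triangle _ _ _
        _ < 1 + 1 := by rw [dist_comm (0:ℂ)]; exact add_lt_add h1 h2
        _ = 2 := by norm_num
      exact Complex.norm_deriv_le_div_of_mapsTo_ball ((hψd n).mono hball) (hdm.mono_right ball_subset_closedBall) hδ
    intro x hx y hy
    exact Convex.norm_image_sub_le_of_norm_deriv_le
      (fun z hz => (hψd n).differentiableAt (isOpen_ball.mem_nhds (hsub n (hsub' hz))))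
      hder (convex_closedBall _ _) hy hx
  have hρ₁0 : (0:ℂ) ∈ closedBall (0:ℂ) ρ₁ := by simp [hρ₁pos.le]
  haveI : Nonempty (closedBall (0:ℂ) ρ₁) := ⟨⟨0, hρ₁0⟩⟩
  obtain ⟨D, hD⟩ := TopologicalSpace.exists_dense_seq (closedBall (0:ℂ) ρ₁)
  set T : Set (ℕ → ℂ) := Set.pi univ (fun _ => closedBall (0:ℂ) 1) with hT
  have hTc : IsCompact T := isCompact_univ_pi (fun _ => isCompact_closedBall _ _)
  have hmemT : ∀ n, (fun k => ψs n (D k : ℂ)) ∈ T := by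
    intro n k _
    exact ball_subset_closedBall (hψball n _ (hsub n (hsub' (D k).2)))
  obtain ⟨a, haT, t, ht_mono, hta⟩ := hTc.tendsto_subseq hmemT
  have hpt : ∀ k, Tendsto (fun n => ψs (t n) (D k : ℂ)) atTop (nhds (a k)) := by
    intro k
    exact tendsto_pi_nhds.mp hta k
  set Ψ : ℕ → ℂ → ℂ := fun n => ψs (t n) with hΨ
  have hUC : UniformCauchySeqOn Ψ atTop (closedBall (0:ℂ) ρ₁) := by
    rw [Metric.uniformCauchySeqOn_iff]
    intro ε hε
    have hK1 : (0:ℝ) < K + 1 := by positivity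
    set δ := ε / 3 / (K + 1) with hdel
    have hδ0 : 0 < δ := by positivity
    have hcover : closedBall (0:ℂ) ρ₁ ⊆ ⋃ k : ℕ, ball (D k : ℂ) δ := by
      intro x hx
      obtain ⟨k, hk⟩ := hD.exists_dist_lt (⟨x, hx⟩ : closedBall (0:ℂ) ρ₁) hδ0
      refine mem_iUnion.mpr ⟨k, ?_⟩
      rw [mem_ball]
      rw [Subtype.dist_eq] at hk
      exact hk
    obtain ⟨I, hI⟩ := (isCompact_closedBall (0:ℂ) ρ₁).elim_finite_subcover
      (fun k : ℕ => ball (D k : ℂ) δ) (fun k => isOpen_ball) hcover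
    have hc : ∀ k : ℕ, ∃ N, ∀ m ≥ N, ∀ n ≥ N, dist (Ψ m (D k : ℂ)) (Ψ n (D k : ℂ)) < ε/3 := by
      intro k
      have hcs := (hpt k).cauchySeq
      rw [Metric.cauchySeq_iff] at hcs
      obtain ⟨N, hN⟩ := hcs (ε/3) (by positivity)
      exact ⟨N, fun m hm n hn => hN m hm n hn⟩
    choose N hN using hc
    refine ⟨Finset.sup I N, fun m hm n hn x hx => ?_⟩
    obtain ⟨k, hkI, hk⟩ : ∃ k ∈ I, x ∈ ball (D k : ℂ) δ := by
      have := hI hx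
      simpa using this
    have hDk : (D k : ℂ) ∈ closedBall (0:ℂ) ρ₁ := (D k).2
    have hxd : ‖x - (D k : ℂ)‖ < δ := by rw [← dist_eq_norm]; exact hk
    have l1 := hLip (t m) x hx (D k : ℂ) hDk
    have l2 := hLip (t n) x hx (D k : ℂ) hDk
    have l3 := hN k m (le_trans (Finset.le_sup hkI) hm) n (le_trans (Finset.le_sup hkI) hn)
    have hKδ : K * ‖x - (D k : ℂ)‖ ≤ ε/3 := by
      have h1 : K * ‖x - (D k:ℂ)‖ ≤ (K+1) * δ :=
        mul_le_mul (by linarith) hxd.le (norm_nonneg _) (by linarith)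
      have h2 : (K+1) * δ = ε/3 := by
        rw [hdel]; field_simp
      linarith
    have d1 : dist (Ψ m x) (Ψ m (D k : ℂ)) ≤ ε/3 := by
      rw [dist_eq_norm]; exact le_trans l1 hKδ
    have d2 : dist (Ψ n (D k : ℂ)) (Ψ n x) ≤ ε/3 := by
      rw [dist_comm, dist_eq_norm]; exact le_trans l2 hKδ
    calc dist (Ψ m x) (Ψ n x) ≤ dist (Ψ m x) (Ψ m (D k : ℂ)) + dist (Ψ m (D k : ℂ)) (Ψ n (D k : ℂ))
        + dist (Ψ n (D k : ℂ)) (Ψ n x) := dist_triangle4 _ _ _ _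
    _ < ε/3 + ε/3 + ε/3 := by linarith
    _ = ε := by ring
  have hptlim : ∀ x ∈ closedBall (0:ℂ) ρ₁, ∃ y, Tendsto (fun n => Ψ n x) atTop (nhds y) := by
    intro x hx
    apply cauchySeq_tendsto_of_complete
    rw [Metric.cauchySeq_iff]
    intro ε hε
    rw [Metric.uniformCauchySeqOn_iff] at hUC
    obtain ⟨M, hM⟩ := hUC ε hε
    exact ⟨M, fun m hm n hn => hM m hm n hn x hx⟩
  choose! Φ hΦ using hptlim
  have hTU : TendstoUniformlyOn Ψ Φ atTop (closedBall (0:ℂ) ρ₁) :=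
    hUC.tendstoUniformlyOn_of_tendsto hΦ
  have hballsub : ball (0:ℂ) ρ₁ ⊆ closedBall (0:ℂ) ρ₁ := ball_subset_closedBall
  have hTLU : TendstoLocallyUniformlyOn Ψ Φ atTop (ball (0:ℂ) ρ₁) :=
    (hTU.tendstoLocallyUniformlyOn).mono hballsub
  have hΨd : ∀ n : ℕ, DifferentiableOn ℂ (Ψ n) (ball (0:ℂ) ρ₁) :=
    fun n => (hψd (t n)).mono (fun z hz => hsub _ (hsub' (hballsub hz)))
  have hΦd : DifferentiableOn ℂ Φ (ball (0:ℂ) ρ₁) :=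
    hTLU.differentiableOn (Eventually.of_forall hΨd) isOpen_ball
  have h0ball : (0:ℂ) ∈ ball (0:ℂ) ρ₁ := by simpa using hρ₁pos
  have hΦ0 : Φ 0 = 0 := by
    have h1 := hΦ 0 hρ₁0
    have h2 : Tendsto (fun n => Ψ n 0) atTop (nhds 0) := by
      have : (fun n => Ψ n 0) = fun _ => (0:ℂ) := funext fun n => hψ0 (t n)
      rw [this]; exact tendsto_const_nhds
    exact tendsto_nhds_unique h1 h2
  have hΦ1 : deriv Φ 0 = 1 := by
    have hder := hTLU.deriv (Eventually.of_forall hΨd) isOpen_ball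
    have h3 : Tendsto (fun n => deriv (Ψ n) 0) atTop (nhds (deriv Φ 0)) :=
      hder.tendsto_at h0ball
    have h4 : (fun n => deriv (Ψ n) 0) = fun _ => (1:ℂ) := funext fun n => hψ1 (t n)
    rw [h4] at h3
    exact (tendsto_nhds_unique tendsto_const_nhds h3).symm
  have hΦle : ∀ x ∈ closedBall (0:ℂ) ρ₁, ‖Φ x‖ ≤ 1 := by
    intro x hx
    have hlim' := (hΦ x hx).norm
    have hle : ∀ n : ℕ, ‖Ψ n x‖ ≤ 1 := fun n =>
      (mem_ball_zero_iff.mp (hψball (t n) x (hsub _ (hsub' hx)))).le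
    exact le_of_tendsto hlim' (Eventually.of_forall hle)
  have hΦlt : ∀ z ∈ ball (0:ℂ) ρ₁, Φ z ∈ ball (0:ℂ) 1 := by
    intro z hz
    rw [mem_ball_zero_iff]
    rcases lt_or_eq_of_le (hΦle z (hballsub hz)) with h | h
    · exact h
    · exfalso
      have hmax : IsMaxOn (norm ∘ Φ) (ball (0:ℂ) ρ₁) z := by
        intro y hy
        have := hΦle y (hballsub hy)
        simp only [Function.comp_apply]
        rw [h]
        exact this
      have heq := Complex.eqOn_of_isPreconnected_of_isMaxOn_norm
        (convex_ball (0:ℂ) ρ₁).isPreconnected isOpen_ball hΦd hz hmax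
      have h0' := heq h0ball
      rw [hΦ0] at h0'
      rw [Function.const_apply] at h0'
      rw [← h0'] at h
      simp at h
  set lα : ℂ := Complex.exp (2 * Real.pi * Complex.I * α) with hlα
  have hnormlα : ‖lα‖ = 1 := hnorme α
  have hβt : Tendsto (fun n => β (t n)) atTop (nhds α) := hβlim.comp ht_mono.tendsto_atTop
  have hlamt : Tendsto (fun n => lam (t n)) atTop (nhds lα) := by
    have h1 : Tendsto (fun n => ((β (t n) : ℂ))) atTop (nhds (α:ℂ)) :=
      (Complex.continuous_ofReal.tendsto α).comp hβt
    have h2 : Tendsto (fun n => 2 * Real.pi * Complex.I * (β (t n) : ℂ)) atTop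
        (nhds (2 * Real.pi * Complex.I * α)) := h1.const_mul _
    exact (Complex.continuous_exp.tendsto _).comp h2
  have hΦconj : ∀ z ∈ ball (0:ℂ) ρ₁, f α (Φ z) = Φ (lα * z) := by
    intro z hz
    have hΨz : Tendsto (fun n => Ψ n z) atTop (nhds (Φ z)) := hΦ z (hballsub hz)
    have hpair : Tendsto (fun n => ((β (t n), Ψ n z) : ℝ × ℂ)) atTop
        (nhdsWithin (α, Φ z) (S ×ˢ ball (0:ℂ) 1)) := by
      rw [tendsto_nhdsWithin_iff]
      constructor
      · exact hβt.prodMk_nhds hΨz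
      · exact Eventually.of_forall fun n =>
          ⟨hβS (t n), hψball (t n) z (hsub _ (hsub' (hballsub hz)))⟩
    have hL : Tendsto (fun n => f (β (t n)) (Ψ n z)) atTop (nhds (f α (Φ z))) := by
      have hc := hcont (α, Φ z) ⟨hα, hΦlt z hz⟩
      exact hc.tendsto.comp hpair
    have hzρ : ‖z‖ < ρ₁ := mem_ball_zero_iff.mp hz
    have hlz : ∀ n : ℕ, lam (t n) * z ∈ closedBall (0:ℂ) ρ₁ := by
      intro n
      rw [mem_closedBall_zero_iff, norm_mul, hnormlam, one_mul]
      exact hzρ.le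
    have hlαz : lα * z ∈ closedBall (0:ℂ) ρ₁ := by
      rw [mem_closedBall_zero_iff, norm_mul, hnormlα, one_mul]
      exact hzρ.le
    have hmul : Tendsto (fun n => lam (t n) * z) atTop
        (nhdsWithin (lα * z) (closedBall (0:ℂ) ρ₁)) := by
      rw [tendsto_nhdsWithin_iff]
      exact ⟨hlamt.mul_const z, Eventually.of_forall hlz⟩
    have hcontΦ : ContinuousWithinAt Φ (closedBall (0:ℂ) ρ₁) (lα * z) :=
      (hTU.continuousOn (Eventually.of_forall fun n =>
        ((hψd (t n)).continuousOn.mono (fun y hy => hsub _ (hsub' hy)))).frequently).continuousWithinAt hlαz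
    have hR : Tendsto (fun n => Ψ n (lam (t n) * z)) atTop (nhds (Φ (lα * z))) :=
      hTU.tendsto_comp hcontΦ hmul
    have heqseq : ∀ n : ℕ, f (β (t n)) (Ψ n z) = Ψ n (lam (t n) * z) := fun n =>
      hconj (t n) z (hsub _ (hsub' (hballsub hz)))
    rw [funext heqseq] at hL
    exact tendsto_nhds_unique hL hR
  have hiter := iterate_conj hnormlα hΦconj
  have himage : MapsTo Φ (ball (0:ℂ) ρ₁) (siegelDisk (f α)) := by
    have hfill : ∀ z ∈ ball (0:ℂ) ρ₁, Φ z ∈ filledSet (f α) := by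
      intro z hz k
      rw [hiter k z hz]
      apply hΦlt
      rw [mem_ball_zero_iff] at hz ⊢
      rwa [norm_mul, norm_pow, hnormlα, one_pow, one_mul]
    have hopenim : IsOpen (Φ '' ball (0:ℂ) ρ₁) :=
      nonconst_open hΦd h0ball (by rw [hΦ1]; exact one_ne_zero) _ subset_rfl isOpen_ball
    have hsubint : Φ '' ball (0:ℂ) ρ₁ ⊆ interior (filledSet (f α)) := by
      apply interior_maximal ?_ hopenim
      rintro w ⟨z, hz, rfl⟩
      exact hfill z hz
    have h0im : (0:ℂ) ∈ Φ '' ball (0:ℂ) ρ₁ := ⟨0, h0ball, hΦ0⟩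
    have hconn : IsPreconnected (Φ '' ball (0:ℂ) ρ₁) :=
      (convex_ball (0:ℂ) ρ₁).isPreconnected.image Φ hΦd.continuousOn
    have hsd := hconn.subset_connectedComponentIn h0im hsubint
    intro z hz
    exact hsd ⟨z, hz, rfl⟩
  have hfinal := le_radius_of_into hρ₁pos hΦd himage hΦ0 hΦ1 (hr α hα)
  linarith
end

section
/- Let α be irrational and f(z) = e^{2πiα}z + Σ_{n≥2} b_n z^n a formal power series. Then there exists a unique formal power series Φ(X) = X + Σ_{n≥2} a_n X^n with Φ(e^{2πiα}X) = f(Φ(X)) as formal power series, and the coefficients satisfy the recursion (e^{2πinα} − e^{2πiα}) a_n = P_{b,n}(a_2, …, a_{n−1}), where P_{b,n}(x_2,…,x_{n−1}) = Σ_{m=2}^{n} b_m Σ x_{i_1}⋯x_{i_m}, the inner sum over m-tuples of positive integers summing to n (with x_1 = 1). -/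
open PowerSeries Finset

/-- Composition `f ∘ Φ` of formal power series (valid when `Φ` has zero constant
term): the `n`-th coefficient is `Σ_{m ≤ n} f_m · (coefficient of zⁿ in Φ^m)`. -/
noncomputable def psComp (f Φ : PowerSeries ℂ) : PowerSeries ℂ :=
  PowerSeries.mk fun n =>
    ∑ m ∈ Finset.range (n + 1), PowerSeries.coeff (R := ℂ) m f * PowerSeries.coeff (R := ℂ) n (Φ ^ m)


-- tuple entries are < n
lemma tuple_lt {m n : ℕ} (hm : 2 ≤ m) {t : Fin m → ℕ}
    (ht : t ∈ Finset.Nat.antidiagonalTuple m n) (hpos : ∀ i, 0 < t i) (i : Fin m) :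
    t i < n := by
  rw [Finset.Nat.mem_antidiagonalTuple] at ht
  have hlt : (i : ℕ) < m := i.isLt
  set j : Fin m := ⟨if (i : ℕ) = 0 then 1 else 0, by split <;> omega⟩ with hj
  have hji : j ≠ i := by
    simp only [Fin.ne_iff_vne, hj]
    split <;> omega
  have h1 : t i + ∑ k ∈ Finset.univ.erase i, t k = ∑ k, t k :=
    Finset.add_sum_erase _ _ (Finset.mem_univ i)
  have h2 : t j ≤ ∑ k ∈ Finset.univ.erase i, t k :=
    Finset.single_le_sum (fun k _ => Nat.zero_le _)
      (Finset.mem_erase.mpr ⟨hji, Finset.mem_univ j⟩)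
  have := hpos j
  omega

-- coeff of power in terms of antidiagonalTuple
lemma coeff_pow_tuple (m n : ℕ) (φ : PowerSeries ℂ) :
    PowerSeries.coeff (R := ℂ) n (φ ^ m) =
      ∑ t ∈ Finset.Nat.antidiagonalTuple m n, ∏ i, PowerSeries.coeff (R := ℂ) (t i) φ := by
  rw [PowerSeries.coeff_pow]
  refine Finset.sum_nbij' (i := fun l => fun i : Fin m => l i)
    (j := fun t => Finsupp.onFinset (Finset.range m)
      (fun j => if h : j < m then t ⟨j, h⟩ else 0) ?_) ?_ ?_ ?_ ?_ ?_
  · intro j hj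
    rw [Finset.mem_range]
    by_contra h
    simp [h] at hj
  · intro l hl
    rw [Finset.mem_finsuppAntidiag] at hl
    rw [Finset.Nat.mem_antidiagonalTuple]
    rw [Fin.sum_univ_eq_sum_range (fun j => l j) m]
    exact hl.1
  · intro t ht
    rw [Finset.Nat.mem_antidiagonalTuple] at ht
    rw [Finset.mem_finsuppAntidiag]
    constructor
    · show (∑ j ∈ Finset.range m, if h : j < m then t ⟨j, h⟩ else 0) = n
      rw [← Fin.sum_univ_eq_sum_range (fun j => if h : j < m then t ⟨j, h⟩ else 0) m]
      simp only [Fin.is_lt, dif_pos, Fin.eta]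
      exact ht
    · exact Finsupp.support_onFinset_subset
  · intro l hl
    rw [Finset.mem_finsuppAntidiag] at hl
    ext k
    simp only [Finsupp.onFinset_apply]
    split
    · rfl
    · next h =>
      symm
      by_contra hk
      exact h (Finset.mem_range.mp (hl.2 (Finsupp.mem_support_iff.mpr hk)))
  · intro t ht
    funext i
    simp [Fin.is_lt]
  · intro l hl
    rw [← Fin.prod_univ_eq_prod_range (fun j => PowerSeries.coeff (R := ℂ) (l j) φ) m]

noncomputable def acoef (e : ℂ) (b : ℕ → ℂ) (n : ℕ) : ℂ :=
  if n = 0 then 0 else if n = 1 then 1 else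
    (e ^ n - e)⁻¹ * ∑ m ∈ Finset.Icc 2 n, b m *
      ∑ t ∈ (Finset.Nat.antidiagonalTuple m n).filter (fun t => ∀ i, 0 < t i),
        ∏ i, if h : t i < n then acoef e b (t i) else 0
  termination_by n
  decreasing_by exact h

lemma acoef_zero (e : ℂ) (b : ℕ → ℂ) : acoef e b 0 = 0 := by rw [acoef]; simp

lemma acoef_one (e : ℂ) (b : ℕ → ℂ) : acoef e b 1 = 1 := by rw [acoef]; simp

lemma acoef_rec (e : ℂ) (b : ℕ → ℂ) {n : ℕ} (hn : 2 ≤ n) :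
    acoef e b n = (e ^ n - e)⁻¹ * ∑ m ∈ Finset.Icc 2 n, b m *
      ∑ t ∈ (Finset.Nat.antidiagonalTuple m n).filter (fun t => ∀ i, 0 < t i),
        ∏ i, acoef e b (t i) := by
  rw [acoef, if_neg (by omega), if_neg (by omega)]
  congr 1
  refine Finset.sum_congr rfl fun m hm => ?_
  congr 1
  refine Finset.sum_congr rfl fun t ht => ?_
  rw [Finset.mem_filter] at ht
  refine Finset.prod_congr rfl fun i _ => ?_
  rw [dif_pos (tuple_lt (Finset.mem_Icc.mp hm).1 ht.1 ht.2 i)]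

lemma coeff_psComp (e : ℂ) (b : ℕ → ℂ) (f Φ : PowerSeries ℂ)
    (hf : ∀ n : ℕ, PowerSeries.coeff (R := ℂ) n f =
      if n = 0 then 0 else if n = 1 then e else b n)
    (h0 : PowerSeries.coeff (R := ℂ) 0 Φ = 0) (n : ℕ) :
    PowerSeries.coeff (R := ℂ) n (psComp f Φ) = e * PowerSeries.coeff (R := ℂ) n Φ +
      ∑ m ∈ Finset.Icc 2 n, b m *
        ∑ t ∈ (Finset.Nat.antidiagonalTuple m n).filter (fun t => ∀ i, 0 < t i),
          ∏ i, PowerSeries.coeff (R := ℂ) (t i) Φ := by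
  rw [psComp, PowerSeries.coeff_mk]
  rcases Nat.eq_zero_or_pos n with rfl | hn
  · simp [hf, h0]
  have hr : Finset.range (n + 1) = insert 0 (insert 1 (Finset.Icc 2 n)) := by
    ext k
    simp only [Finset.mem_range, Finset.mem_insert, Finset.mem_Icc]
    omega
  rw [hr, Finset.sum_insert (by simp), Finset.sum_insert (by simp)]
  rw [hf 0, hf 1]
  simp only [reduceIte, if_neg one_ne_zero, zero_mul, pow_one, zero_add]
  congr 1
  refine Finset.sum_congr rfl fun m hm => ?_
  rw [Finset.mem_Icc] at hm
  rw [hf m, if_neg (by omega), if_neg (by omega)]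
  congr 1
  rw [coeff_pow_tuple]
  refine (Finset.sum_filter_of_ne fun t ht hne => ?_).symm
  intro i
  by_contra hi
  push_neg at hi
  exact hne (Finset.prod_eq_zero (Finset.mem_univ i) (by rw [Nat.le_zero.mp hi, h0]))

lemma e_pow_ne (α : ℝ) (hα : Irrational α) (e : ℂ)
    (he : e = Complex.exp (2 * Real.pi * Complex.I * α)) {n : ℕ} (hn : 2 ≤ n) :
    e ^ n - e ≠ 0 := by
  rw [sub_ne_zero]
  intro h
  have hez : e ≠ 0 := by rw [he]; exact Complex.exp_ne_zero _
  have hpow : e ^ (n - 1) = 1 := by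
    have : e ^ (n - 1) * e = 1 * e := by
      rw [one_mul, ← pow_succ]
      rw [show n - 1 + 1 = n by omega]
      exact h
    exact mul_right_cancel₀ hez this
  rw [he, ← Complex.exp_nat_mul, Complex.exp_eq_one_iff] at hpow
  obtain ⟨k, hk⟩ := hpow
  have h2 : (2 * Real.pi * Complex.I : ℂ) ≠ 0 := by
    simp [Real.pi_ne_zero, Complex.I_ne_zero]
  have hk' : ((n - 1 : ℕ) : ℂ) * (α : ℂ) = (k : ℂ) := by
    apply mul_right_cancel₀ h2
    rw [mul_assoc] at hk
    rw [← hk]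
    push_cast
    ring
  have hk'' : ((n - 1 : ℕ) : ℝ) * α = (k : ℝ) := by
    exact_mod_cast hk'
  have hne : ((n - 1 : ℕ) : ℝ) ≠ 0 := by
    simp; omega
  apply hα
  refine ⟨(k : ℚ) / ((n : ℚ) - 1), ?_⟩
  push_cast [Nat.cast_sub (show 1 ≤ n by omega)] at hk''
  have hn1 : ((n : ℝ) - 1) ≠ 0 := by
    have h2n : (2 : ℝ) ≤ (n : ℝ) := by exact_mod_cast hn
    linarith
  have hα' : α = (k : ℝ) / ((n : ℝ) - 1) :=
    ((eq_div_iff hn1).mpr (by rw [mul_comm]; exact hk'')).symm.symm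
  push_cast
  rw [hα']

/-- Existence and uniqueness of the formal linearization for an irrational
multiplier `e = e^{2πiα}`: there is a unique `Φ(X) = X + Σ_{n≥2} aₙ Xⁿ` with
`Φ(eX) = f(Φ(X))`, and its coefficients satisfy the recursion
`(eⁿ − e) aₙ = P_{b,n}(a₂, …, a_{n−1})`, where
`P_{b,n} = Σ_{m=2}^{n} b_m Σ x_{i₁}⋯x_{i_m}` (sum over `m`-tuples of positive
integers summing to `n`, with `x₁ = 1`). -/
theorem formal_linearization_exists_unique
    (α : ℝ) (hα : Irrational α)
    (e : ℂ) (he : e = Complex.exp (2 * Real.pi * Complex.I * α))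
    (b : ℕ → ℂ) (f : PowerSeries ℂ)
    (hf : ∀ n : ℕ, PowerSeries.coeff (R := ℂ) n f =
      if n = 0 then 0 else if n = 1 then e else b n) :
    ∃! Φ : PowerSeries ℂ,
      PowerSeries.coeff (R := ℂ) 0 Φ = 0 ∧ PowerSeries.coeff (R := ℂ) 1 Φ = 1 ∧
      PowerSeries.rescale e Φ = psComp f Φ ∧
      ∀ n : ℕ, 2 ≤ n →
        (e ^ n - e) * PowerSeries.coeff (R := ℂ) n Φ =
          ∑ m ∈ Finset.Icc 2 n, b m *
            ∑ t ∈ (Finset.Nat.antidiagonalTuple m n).filter (fun t => ∀ i, 0 < t i),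
              ∏ i, PowerSeries.coeff (R := ℂ) (t i) Φ := by
  have hne : ∀ {n : ℕ}, 2 ≤ n → e ^ n - e ≠ 0 := fun {n} hn => e_pow_ne α hα e he hn
  set Φ₀ : PowerSeries ℂ := PowerSeries.mk (acoef e b) with hΦ₀
  have hc0 : PowerSeries.coeff (R := ℂ) 0 Φ₀ = 0 := by
    rw [hΦ₀, PowerSeries.coeff_mk, acoef_zero]
  have hc1 : PowerSeries.coeff (R := ℂ) 1 Φ₀ = 1 := by
    rw [hΦ₀, PowerSeries.coeff_mk, acoef_one]
  have hrec : ∀ n : ℕ, 2 ≤ n →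
      (e ^ n - e) * PowerSeries.coeff (R := ℂ) n Φ₀ =
        ∑ m ∈ Finset.Icc 2 n, b m *
          ∑ t ∈ (Finset.Nat.antidiagonalTuple m n).filter (fun t => ∀ i, 0 < t i),
            ∏ i, PowerSeries.coeff (R := ℂ) (t i) Φ₀ := by
    intro n hn
    rw [hΦ₀]
    simp only [PowerSeries.coeff_mk]
    rw [acoef_rec e b hn, ← mul_assoc, mul_inv_cancel₀ (hne hn), one_mul]
  have hfun : PowerSeries.rescale e Φ₀ = psComp f Φ₀ := by
    ext n
    rw [PowerSeries.coeff_rescale, coeff_psComp e b f Φ₀ hf hc0]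
    match n, (by omega : n = 0 ∨ n = 1 ∨ 2 ≤ n) with
    | _, Or.inl rfl => simp [hc0]
    | _, Or.inr (Or.inl rfl) => simp
    | n, Or.inr (Or.inr hn) =>
      have h := hrec n hn
      ring_nf
      ring_nf at h
      linear_combination h
  refine ⟨Φ₀, ⟨hc0, hc1, hfun, hrec⟩, ?_⟩
  rintro Ψ ⟨g0, g1, _, grec⟩
  ext n
  induction n using Nat.strong_induction_on with
  | _ n ih =>
    match n, (by omega : n = 0 ∨ n = 1 ∨ 2 ≤ n) with
    | _, Or.inl rfl => rw [g0, hc0]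
    | _, Or.inr (Or.inl rfl) => rw [g1, hc1]
    | n, Or.inr (Or.inr hn) =>
      have hS : ∑ m ∈ Finset.Icc 2 n, b m *
            ∑ t ∈ (Finset.Nat.antidiagonalTuple m n).filter (fun t => ∀ i, 0 < t i),
              ∏ i, PowerSeries.coeff (R := ℂ) (t i) Ψ =
          ∑ m ∈ Finset.Icc 2 n, b m *
            ∑ t ∈ (Finset.Nat.antidiagonalTuple m n).filter (fun t => ∀ i, 0 < t i),
              ∏ i, PowerSeries.coeff (R := ℂ) (t i) Φ₀ := by
        refine Finset.sum_congr rfl fun m hm => ?_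
        congr 1
        refine Finset.sum_congr rfl fun t ht => ?_
        rw [Finset.mem_filter] at ht
        refine Finset.prod_congr rfl fun i _ => ?_
        exact ih (t i) (tuple_lt (Finset.mem_Icc.mp hm).1 ht.1 ht.2 i)
      have := (grec n hn).trans (hS.trans (hrec n hn).symm)
      exact mul_left_cancel₀ (hne hn) this
end
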